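/- (Theorem 1: geometric convergence of GDCA-Tree at a tree node.) Suppose each ℓ*_i is convex. Let (Ω, 𝔉, μ) be a probability space, S_1, …, S_K pairwise disjoint subsets of {1, …, m}, Q = S_1 ∪ ⋯ ∪ S_K, β_1, …, β_K ∈ [0,1] with Σ_k β_k = 1, Θ_1, …, Θ_K ∈ [0,1), γ > 0, ρ ≥ 0, and write s = λmγ/(ρ + λmγ). Assume that for every β ∈ ℝ^m agreeing with a fixed initial α^{(0)} ∈ ℝ^m outside Q: (a) for each k the set {D(β') : β'_i = β_i for all i ∉ S_k} and the set {D(β') : β'_i = β_i for all i ∉ Q} are bounded above; and (b) Σ_{k=1}^K ε_{S_k}(β) ≥ s · ε_Q(β). Let T ≥ 1 and, for t = 1, …, T, let Δ_k^{(t)} : Ω → ℝ^m be measurable maps supported on S_k (i.e., (Δ_k^{(t)}(ω))_i = 0 for i ∉ S_k), and define the random iterates α^{(t)}(ω) = α^{(t−1)}(ω) + Σ_{k=1}^K β_k Δ_k^{(t)}(ω), with α^{(0)} constant. Assume for every t and k that ω ↦ D(α^{(t)}(ω)), ω ↦ ε_{S_k}(α^{(t−1)}(ω)), ω ↦ ε_{S_k}(α^{(t−1)}(ω)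 + Δ_k^{(t)}(ω)), and ω ↦ ε_Q(α^{(t)}(ω)) are integrable, and that the expected local improvement ∫ ε_{S_k}(α^{(t−1)}(ω) + Δ_k^{(t)}(ω)) dμ(ω) ≤ Θ_k · ∫ ε_{S_k}(α^{(t−1)}(ω)) dμ(ω) holds. Then ∫ ε_Q(α^{(T)}(ω)) dμ(ω) ≤ ( 1 − ( min_{k=1,…,K} (1 − Θ_k) β_k ) · λmγ/(ρ + λmγ) )^T · ε_Q(α^{(0)}). -/

import Mathlib

open scoped BigOperators
open MeasureTheory

/-- Local sub-optimality gap over an index set `S`: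
`ε_S(α) = sup {D(β) : β agrees with α outside S} − D(α)`. -/
noncomputable def locGap {m : ℕ} (D : (Fin m → ℝ) → ℝ) (S : Set (Fin m))
    (α : Fin m → ℝ) : ℝ :=
  sSup (D '' {β | ∀ i ∉ S, β i = α i}) - D α

/-!
All iterates agree with `α⁽⁰⁾` outside `Q`, so `ε_Q` at each of them is one fixed supremum
minus `D`; likewise `ε_{Sₖ}(α)` and `ε_{Sₖ}(α + Δₖ)` share their supremum. Since `D` is
concave, Jensen's inequality for the average `α + ∑ βₖ Δₖ` of the points `α + Δₖ` gives
`ε_Q(α⁺) ≤ ε_Q(α) − ∑ βₖ (ε_{Sₖ}(α) − ε_{Sₖ}(α + Δₖ))`. In expectation the local improvement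
bounds the decrease below by `∑ (1 − Θₖ) βₖ 𝔼 ε_{Sₖ} ≥ c ∑ 𝔼 ε_{Sₖ} ≥ c s 𝔼 ε_Q`, with
`c = minₖ (1 − Θₖ) βₖ` and the local-to-global bound, so the expected gap on `Q` contracts by
the factor `1 − c s` in every step.
-/

open Set

theorem ConvexOn.sum {𝕜 E β ι : Type*} [Semiring 𝕜] [PartialOrder 𝕜] [AddCommMonoid E]
    [AddCommMonoid β] [PartialOrder β] [IsOrderedAddMonoid β] [SMul 𝕜 E] [Module 𝕜 β]
    {s : Set E} (hs : Convex 𝕜 s) (t : Finset ι) {f : ι → E → β}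
    (hf : ∀ i ∈ t, ConvexOn 𝕜 s (f i)) : ConvexOn 𝕜 s fun x => ∑ i ∈ t, f i x := by
  classical
  induction t using Finset.induction_on with
  | empty => simpa using convexOn_const (0 : β) hs
  | insert i t hi ih =>
    simp only [Finset.sum_insert hi]
    exact (hf i (Finset.mem_insert_self i t)).add
      (ih fun j hj => hf j (Finset.mem_insert_of_mem hj))

theorem convexOn_univ_norm_sq {E : Type*} [SeminormedAddCommGroup E] [NormedSpace ℝ E] :
    ConvexOn ℝ univ fun x : E => ‖x‖ ^ 2 :=
  convexOn_univ_norm.pow (fun _ _ => norm_nonneg _) 2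

theorem concaveOn_neg_mul_norm_sq_sub_mul_sum {ι E : Type*} [Fintype ι]
    [SeminormedAddCommGroup E] [NormedSpace ℝ E] {lam c : ℝ} (hlam : 0 ≤ lam) (hc : 0 ≤ c)
    (L : (ι → ℝ) →ₗ[ℝ] E) {ℓ : ι → ℝ → ℝ} (hℓ : ∀ i, ConvexOn ℝ univ (ℓ i)) :
    ConcaveOn ℝ univ fun α => -(lam / 2) * ‖L α‖ ^ 2 - c * ∑ i, ℓ i (-α i) := by
  have hquad : ConvexOn ℝ univ fun α => ‖L α‖ ^ 2 := convexOn_univ_norm_sq.comp_linearMap L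
  have hsep : ConvexOn ℝ univ fun α : ι → ℝ => ∑ i, ℓ i (-α i) :=
    ConvexOn.sum convex_univ _ fun i _ =>
      (hℓ i).comp_linearMap (-LinearMap.proj (R := ℝ) (φ := fun _ : ι => ℝ) i)
  refine ((hquad.smul (by positivity : 0 ≤ lam / 2)).add (hsep.smul hc)).neg.congr ?_
  intro α _
  simp only [Pi.neg_apply, Pi.add_apply, smul_eq_mul]
  ring

theorem ConcaveOn.sum_mul_le_map_add_sum_smul {ι V : Type*} [AddCommGroup V] [Module ℝ V]
    {f : V → ℝ} (hf : ConcaveOn ℝ univ f) {t : Finset ι} {w : ι → ℝ}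
    (hw₀ : ∀ i ∈ t, 0 ≤ w i) (hw₁ : ∑ i ∈ t, w i = 1) (x : V) (v : ι → V) :
    ∑ i ∈ t, w i * f (x + v i) ≤ f (x + ∑ i ∈ t, w i • v i) := by
  have hx : ∑ i ∈ t, w i • (x + v i) = x + ∑ i ∈ t, w i • v i := by
    simp only [smul_add, Finset.sum_add_distrib]
    rw [← Finset.sum_smul, hw₁, one_smul]
  simpa only [hx, smul_eq_mul] using hf.le_map_sum hw₀ hw₁ fun i _ => mem_univ (x + v i)

theorem add_sum_smul_apply_of_notMem {ι κ : Type*} [Fintype ι] {S : ι → Set κ} {Q : Set κ}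
    (hSQ : ∀ k, S k ⊆ Q) (w : ι → ℝ) (α : κ → ℝ) {δ : ι → κ → ℝ}
    (hδ : ∀ k, ∀ i ∉ S k, δ k i = 0) {i : κ} (hi : i ∉ Q) :
    (α + ∑ k, w k • δ k) i = α i := by
  simp [Finset.sum_apply, hδ _ i fun h => hi (hSQ _ h)]

section LocalGap

variable {m : ℕ} {D : (Fin m → ℝ) → ℝ}

theorem locGap_eq_of_eqOn_compl {S : Set (Fin m)} {α α' : Fin m → ℝ}
    (h : ∀ i ∉ S, α' i = α i) :
    locGap D S α' = sSup (D '' {β | ∀ i ∉ S, β i = α i}) - D α' := by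
  have hslice : {β : Fin m → ℝ | ∀ i ∉ S, β i = α' i} = {β | ∀ i ∉ S, β i = α i} := by
    ext β
    exact forall₂_congr fun i hi => by rw [h i hi]
  rw [locGap, hslice]

theorem locGap_nonneg {S : Set (Fin m)} {α : Fin m → ℝ}
    (hb : BddAbove (D '' {β | ∀ i ∉ S, β i = α i})) : 0 ≤ locGap D S α :=
  sub_nonneg.2 (le_csSup hb ⟨α, fun _ _ => rfl, rfl⟩)

theorem locGap_sub_locGap_add {S : Set (Fin m)} (α : Fin m → ℝ) {δ : Fin m → ℝ}
    (hδ : ∀ i ∉ S, δ i = 0) : locGap D S α - locGap D S (α + δ) = D (α + δ) - D α := by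
  rw [locGap_eq_of_eqOn_compl (α := α) (α' := α + δ) fun i hi => by simp [hδ i hi],
    locGap]
  ring

theorem locGap_add_sum_smul_le {ι : Type*} [Fintype ι] (hD : ConcaveOn ℝ univ D)
    {S : ι → Set (Fin m)} {Q : Set (Fin m)} (hSQ : ∀ k, S k ⊆ Q) {w : ι → ℝ}
    (hw₀ : ∀ k, 0 ≤ w k) (hw₁ : ∑ k, w k = 1) (α : Fin m → ℝ) {δ : ι → Fin m → ℝ}
    (hδ : ∀ k, ∀ i ∉ S k, δ k i = 0) :
    locGap D Q (α + ∑ k, w k • δ k) ≤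
      locGap D Q α - ∑ k, w k * (locGap D (S k) α - locGap D (S k) (α + δ k)) := by
  have hgain : ∑ k, w k * (locGap D (S k) α - locGap D (S k) (α + δ k)) =
      ∑ k, w k * D (α + δ k) - D α := by
    simp only [locGap_sub_locGap_add α (hδ _), mul_sub, Finset.sum_sub_distrib,
      ← Finset.sum_mul, hw₁, one_mul]
  rw [hgain, locGap_eq_of_eqOn_compl fun i hi => add_sum_smul_apply_of_notMem hSQ w α hδ hi,
    locGap]
  linarith [hD.sum_mul_le_map_add_sum_smul (fun k _ => hw₀ k) hw₁ α δ]

theorem integral_locGap_add_sum_smul_le {ι Ω : Type*}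
    [Fintype ι] [MeasurableSpace Ω] {μ : Measure Ω} (hD : ConcaveOn ℝ univ D)
    {S : ι → Set (Fin m)} {Q : Set (Fin m)} (hSQ : ∀ k, S k ⊆ Q) {w : ι → ℝ}
    (hw₀ : ∀ k, 0 ≤ w k) (hw₁ : ∑ k, w k = 1) {α : Ω → Fin m → ℝ}
    {δ : ι → Ω → Fin m → ℝ} (hδ : ∀ k ω, ∀ i ∉ S k, δ k ω i = 0)
    (hQ : Integrable (fun ω => locGap D Q (α ω)) μ)
    (hQ' : Integrable (fun ω => locGap D Q (α ω + ∑ k, w k • δ k ω)) μ)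
    (hS : ∀ k, Integrable (fun ω => locGap D (S k) (α ω)) μ)
    (hS' : ∀ k, Integrable (fun ω => locGap D (S k) (α ω + δ k ω)) μ) :
    ∫ ω, locGap D Q (α ω + ∑ k, w k • δ k ω) ∂μ ≤
      ∫ ω, locGap D Q (α ω) ∂μ - ∑ k, w k *
        (∫ ω, locGap D (S k) (α ω) ∂μ - ∫ ω, locGap D (S k) (α ω + δ k ω) ∂μ) := by
  have hgain : ∀ k, Integrable
      (fun ω => w k * (locGap D (S k) (α ω) - locGap D (S k) (α ω + δ k ω))) μ :=
    fun k => ((hS k).sub (hS' k)).const_mul _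
  calc ∫ ω, locGap D Q (α ω + ∑ k, w k • δ k ω) ∂μ
      ≤ ∫ ω, (locGap D Q (α ω) - ∑ k, w k *
          (locGap D (S k) (α ω) - locGap D (S k) (α ω + δ k ω))) ∂μ :=
        integral_mono hQ' (hQ.sub (integrable_finsetSum _ fun k _ => hgain k))
          fun ω => locGap_add_sum_smul_le hD hSQ hw₀ hw₁ (α ω) (hδ · ω)
    _ = _ := by
        rw [integral_sub hQ (integrable_finsetSum _ fun k _ => hgain k),
          integral_finsetSum _ fun k _ => hgain k]
        simp only [integral_const_mul, integral_sub (hS _) (hS' _)]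

end LocalGap

theorem le_one_sub_mul_mul_of_le_sub_sum {ι : Type*} [Fintype ι] {E E' c s : ℝ}
    {w Θ I J : ι → ℝ} (hE' : E' ≤ E - ∑ k, w k * (I k - J k)) (hJ : ∀ k, J k ≤ Θ k * I k)
    (hw₀ : ∀ k, 0 ≤ w k) (hI : ∀ k, 0 ≤ I k) (hc₀ : 0 ≤ c) (hc : ∀ k, c ≤ (1 - Θ k) * w k)
    (hs : s * E ≤ ∑ k, I k) : E' ≤ (1 - c * s) * E := by
  have hprogress : c * ∑ k, I k ≤ ∑ k, w k * (I k - J k) := by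
    rw [Finset.mul_sum]
    refine Finset.sum_le_sum fun k _ => ?_
    calc c * I k ≤ (1 - Θ k) * w k * I k := mul_le_mul_of_nonneg_right (hc k) (hI k)
      _ ≤ w k * (I k - J k) := by nlinarith [mul_le_mul_of_nonneg_left (hJ k) (hw₀ k)]
  nlinarith [mul_le_mul_of_nonneg_left hs hc₀]

theorem gdca_tree_geometric_convergence_general
    (m d K : ℕ) (hK : 0 < K)
    (x : Fin m → EuclideanSpace ℝ (Fin d))
    (lam : ℝ) (hlam : 0 < lam)
    (ℓs : Fin m → ℝ → ℝ) (hconv : ∀ i, ConvexOn ℝ Set.univ (ℓs i))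
    (A : (Fin m → ℝ) → EuclideanSpace ℝ (Fin d))
    (hA : ∀ α, A α = (1 / (lam * m)) • ∑ i, α i • x i)
    (D : (Fin m → ℝ) → ℝ)
    (hD : ∀ α, D α = -(lam / 2) * ‖A α‖ ^ 2 - (1 / m) * ∑ i, ℓs i (-(α i)))
    (Ω : Type*) [MeasurableSpace Ω] (μ : Measure Ω) [IsProbabilityMeasure μ]
    (S : Fin K → Set (Fin m))
    (Q : Set (Fin m)) (hQ : Q = ⋃ k, S k)
    (β : Fin K → ℝ) (hβ0 : ∀ k, 0 ≤ β k) (hβ1 : ∀ k, β k ≤ 1)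
    (hβsum : ∑ k, β k = 1)
    (Θ : Fin K → ℝ) (hΘ0 : ∀ k, 0 ≤ Θ k) (hΘ1 : ∀ k, Θ k < 1)
    (γ ρ : ℝ) (hγ : 0 < γ) (hρ : 0 ≤ ρ)
    (α0 : Fin m → ℝ)
    (hbddS : ∀ βv : Fin m → ℝ, (∀ i ∉ Q, βv i = α0 i) →
      ∀ k, BddAbove (D '' {β' | ∀ i ∉ S k, β' i = βv i}))
    (hlocglob : ∀ βv : Fin m → ℝ, (∀ i ∉ Q, βv i = α0 i) →
      lam * m * γ / (ρ + lam * m * γ) * locGap D Q βv ≤ ∑ k, locGap D (S k) βv)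
    (T : ℕ)
    (Δ : Fin K → ℕ → Ω → Fin m → ℝ)
    (hsupp : ∀ k, ∀ t < T, ∀ ω, ∀ i ∉ S k, Δ k t ω i = 0)
    (a : ℕ → Ω → Fin m → ℝ)
    (ha0 : ∀ ω, a 0 ω = α0)
    (hastep : ∀ t < T, ∀ ω, a (t + 1) ω = a t ω + ∑ k, β k • Δ k t ω)
    (hintS : ∀ t < T, ∀ k, Integrable (fun ω => locGap D (S k) (a t ω)) μ)
    (hintS' : ∀ t < T, ∀ k, Integrable (fun ω => locGap D (S k) (a t ω + Δ k t ω)) μ)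
    (hintQ : ∀ t ≤ T, Integrable (fun ω => locGap D Q (a t ω)) μ)
    (himp : ∀ t < T, ∀ k, ∫ ω, locGap D (S k) (a t ω + Δ k t ω) ∂μ ≤
      Θ k * ∫ ω, locGap D (S k) (a t ω) ∂μ) :
    ∫ ω, locGap D Q (a T ω) ∂μ ≤
      (1 - (Finset.univ.inf' ⟨⟨0, hK⟩, Finset.mem_univ _⟩ fun k => (1 - Θ k) * β k) *
        (lam * m * γ / (ρ + lam * m * γ))) ^ T * locGap D Q α0 := by
  have hSQ : ∀ k, S k ⊆ Q := hQ ▸ subset_iUnion S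
  have hDconc : ConcaveOn ℝ univ D := by
    have hDeq : D = fun α =>
        -(lam / 2) * ‖((1 / (lam * m)) • Fintype.linearCombination ℝ x) α‖ ^ 2
          - (1 / m) * ∑ i, ℓs i (-α i) :=
      funext fun α => by simp [hD, hA, Fintype.linearCombination_apply]
    exact hDeq ▸ concaveOn_neg_mul_norm_sq_sub_mul_sum hlam.le (by positivity) _ hconv
  have hagree : ∀ t ≤ T, ∀ ω, ∀ i ∉ Q, a t ω i = α0 i := by
    intro t
    induction t with
    | zero => simp [ha0]
    | succ t ih =>
      intro ht ω i hi
      rw [hastep t ht ω, add_sum_smul_apply_of_notMem hSQ β _ (hsupp · t ht ω) hi,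
        ih (Nat.le_of_succ_le ht) ω i hi]
  set c := Finset.univ.inf' ⟨⟨0, hK⟩, Finset.mem_univ _⟩ fun k => (1 - Θ k) * β k
  set s := lam * m * γ / (ρ + lam * m * γ)
  have hc : ∀ k, c ≤ (1 - Θ k) * β k := fun k => Finset.inf'_le _ (Finset.mem_univ k)
  have hc₀ : 0 ≤ c := Finset.le_inf' _ _ fun k _ => mul_nonneg (by linarith [hΘ1 k]) (hβ0 k)
  have hrate : 0 ≤ 1 - c * s := by
    have hc₁ : c ≤ 1 := by nlinarith [hc ⟨0, hK⟩, hβ0 ⟨0, hK⟩, hβ1 ⟨0, hK⟩, hΘ0 ⟨0, hK⟩]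
    have hs₁ : s ≤ 1 := div_le_one_of_le₀ (by linarith) (by positivity)
    nlinarith [mul_le_one₀ hc₁ (by positivity : 0 ≤ s) hs₁]
  have hstep : ∀ t < T, ∫ ω, locGap D Q (a (t + 1) ω) ∂μ ≤
      (1 - c * s) * ∫ ω, locGap D Q (a t ω) ∂μ := by
    intro t ht
    have hintQ' := hintQ (t + 1) ht
    simp_rw [hastep t ht] at hintQ' ⊢
    refine le_one_sub_mul_mul_of_le_sub_sum
      (integral_locGap_add_sum_smul_le hDconc hSQ hβ0 hβsum (hsupp · t ht) (hintQ t ht.le)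
        hintQ' (hintS t ht) (hintS' t ht)) (himp t ht) hβ0
      (fun k => integral_nonneg fun ω => locGap_nonneg (hbddS _ (hagree t ht.le ω) k))
      hc₀ hc ?_
    rw [← integral_const_mul, ← integral_finsetSum _ fun k _ => hintS t ht k]
    exact integral_mono ((hintQ t ht.le).const_mul s)
      (integrable_finsetSum _ fun k _ => hintS t ht k) fun ω => hlocglob _ (hagree t ht.le ω)
  simpa [ha0] using le_geom (u := fun t => ∫ ω, locGap D Q (a t ω) ∂μ) hrate T hstep

/-- Theorem 1: geometric convergence of GDCA-Tree at a tree node `Q = S₁ ∪ ⋯ ∪ S_K`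
after `T` iterations:
`𝔼[ε_Q(α^{(T)})] ≤ (1 − (minₖ (1 − Θₖ)βₖ)·λmγ/(ρ + λmγ))^T · ε_Q(α^{(0)})`. -/
theorem gdca_tree_geometric_convergence
    (m d K : ℕ) (hm : 0 < m) (hd : 0 < d) (hK : 0 < K)
    (x : Fin m → EuclideanSpace ℝ (Fin d)) (hx : ∀ i, ‖x i‖ ≤ 1)
    (lam : ℝ) (hlam : 0 < lam)
    (ℓs : Fin m → ℝ → ℝ) (hconv : ∀ i, ConvexOn ℝ Set.univ (ℓs i))
    (A : (Fin m → ℝ) → EuclideanSpace ℝ (Fin d))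
    (hA : ∀ α, A α = (1 / (lam * m)) • ∑ i, α i • x i)
    (D : (Fin m → ℝ) → ℝ)
    (hD : ∀ α, D α = -(lam / 2) * ‖A α‖ ^ 2 - (1 / m) * ∑ i, ℓs i (-(α i)))
    (Ω : Type*) [MeasurableSpace Ω] (μ : Measure Ω) [IsProbabilityMeasure μ]
    (S : Fin K → Set (Fin m))
    (hdisj : ∀ k k', k ≠ k' → Disjoint (S k) (S k'))
    (Q : Set (Fin m)) (hQ : Q = ⋃ k, S k)
    (β : Fin K → ℝ) (hβ0 : ∀ k, 0 ≤ β k) (hβ1 : ∀ k, β k ≤ 1)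
    (hβsum : ∑ k, β k = 1)
    (Θ : Fin K → ℝ) (hΘ0 : ∀ k, 0 ≤ Θ k) (hΘ1 : ∀ k, Θ k < 1)
    (γ ρ : ℝ) (hγ : 0 < γ) (hρ : 0 ≤ ρ)
    (α0 : Fin m → ℝ)
    (hbddS : ∀ βv : Fin m → ℝ, (∀ i ∉ Q, βv i = α0 i) →
      ∀ k, BddAbove (D '' {β' | ∀ i ∉ S k, β' i = βv i}))
    (hbddQ : ∀ βv : Fin m → ℝ, (∀ i ∉ Q, βv i = α0 i) →
      BddAbove (D '' {β' | ∀ i ∉ Q, β' i = βv i}))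
    (hlocglob : ∀ βv : Fin m → ℝ, (∀ i ∉ Q, βv i = α0 i) →
      lam * m * γ / (ρ + lam * m * γ) * locGap D Q βv ≤ ∑ k, locGap D (S k) βv)
    (T : ℕ) (hT : 1 ≤ T)
    (Δ : Fin K → ℕ → Ω → Fin m → ℝ) (hmeas : ∀ k, ∀ t < T, Measurable (Δ k t))
    (hsupp : ∀ k, ∀ t < T, ∀ ω, ∀ i ∉ S k, Δ k t ω i = 0)
    (a : ℕ → Ω → Fin m → ℝ)
    (ha0 : ∀ ω, a 0 ω = α0)
    (hastep : ∀ t < T, ∀ ω, a (t + 1) ω = a t ω + ∑ k, β k • Δ k t ω)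
    (hintD : ∀ t ≤ T, Integrable (fun ω => D (a t ω)) μ)
    (hintS : ∀ t < T, ∀ k, Integrable (fun ω => locGap D (S k) (a t ω)) μ)
    (hintS' : ∀ t < T, ∀ k, Integrable (fun ω => locGap D (S k) (a t ω + Δ k t ω)) μ)
    (hintQ : ∀ t ≤ T, Integrable (fun ω => locGap D Q (a t ω)) μ)
    (himp : ∀ t < T, ∀ k, ∫ ω, locGap D (S k) (a t ω + Δ k t ω) ∂μ ≤
      Θ k * ∫ ω, locGap D (S k) (a t ω) ∂μ) :
    ∫ ω, locGap D Q (a T ω) ∂μ ≤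
      (1 - (Finset.univ.inf' ⟨⟨0, hK⟩, Finset.mem_univ _⟩ fun k => (1 - Θ k) * β k) *
        (lam * m * γ / (ρ + lam * m * γ))) ^ T * locGap D Q α0 :=
  gdca_tree_geometric_convergence_general m d K hK x lam hlam ℓs hconv A hA D hD Ω μ S Q hQ β hβ0
    hβ1 hβsum Θ hΘ0 hΘ1 γ ρ hγ hρ α0 hbddS hlocglob T Δ hsupp a ha0 hastep hintS hintS' hintQ himp
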